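/- arXiv:2403.12860 — 7 statements merged into one kernel-verified Lean document; each statement's English description precedes it below -/
import Mathlib

section
/- Let F be a finite field and p(x) a polynomial over F. Then there exist elements a, b in F such that the polynomial p(x) + a·x + b has no roots in F. -/
theorem stmt_0 (F : Type*) [Field F] [Fintype F] (p : Polynomial F) :
    ∃ a b : F, ∀ x : F, Polynomial.eval x p + a * x + b ≠ 0 := by
  set a : F := Polynomial.eval 0 p - Polynomial.eval 1 p with ha
  set f : F → F := fun x => -(Polynomial.eval x p) - a * x with hf
  have hni : ¬ Function.Injective f := by
    intro h
    have h01 : f 0 = f 1 := by simp [hf, ha]; ring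
    exact one_ne_zero (h h01).symm
  have hns : ¬ Function.Surjective f := fun hs =>
    hni (Finite.injective_iff_surjective.mpr hs)
  simp only [Function.Surjective, not_forall] at hns
  obtain ⟨b, hb⟩ := hns
  push_neg at hb
  refine ⟨a, b, fun x hx => hb x ?_⟩
  have : f x = b := by simp only [hf]; linear_combination -hx
  exact this
end

section
/- Let p be a prime, n ≥ 1, k ≥ 2, F = F_{p^n}, and let A, B in F be such that x^((p^k - 1)/(p - 1)) + A·x + B has no root in F. Define f : F^k → F^k by f(x_1, ..., x_k) = (x_1^p - x_2, ..., x_{k-1}^p - x_k, x_k^p + A·x_2 + B·x_1). Then f is a bijection. -/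
theorem stmt_2 (p : ℕ) (hp : p.Prime) (n k : ℕ) (hn : 1 ≤ n) (hk : 2 ≤ k)
    (F : Type*) [Field F] [Fintype F] (hF : Fintype.card F = p ^ n)
    (A B : F) (hAB : ∀ x : F, x ^ ((p ^ k - 1) / (p - 1)) + A * x + B ≠ 0) :
    Function.Bijective (fun x : Fin k → F => fun i : Fin k =>
      if h : (i : ℕ) + 1 < k then x i ^ p - x ⟨(i : ℕ) + 1, h⟩
      else x i ^ p + A * x ⟨1, by omega⟩ + B * x ⟨0, by omega⟩) := by
  haveI := Fact.mk hp
  -- characteristic of F is p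
  haveI hqchar : CharP F (ringChar F) := ringChar.charP F
  obtain ⟨m, hqprime, hcard⟩ := FiniteField.card F (ringChar F)
  have hpq : ringChar F = p := by
    have hd : p ∣ (ringChar F) ^ (m : ℕ) := by
      rw [← hcard, hF]; exact dvd_pow_self p (by omega)
    exact ((Nat.prime_dvd_prime_iff_eq hp hqprime).mp (hp.dvd_of_dvd_pow hd)).symm
  haveI hchar : CharP F p := hpq ▸ hqchar
  -- kernel triviality
  have key : ∀ z : Fin k → F,
      (∀ i : Fin k, (if h : (i : ℕ) + 1 < k then z i ^ p - z ⟨(i : ℕ) + 1, h⟩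
        else z i ^ p + A * z ⟨1, by omega⟩ + B * z ⟨0, by omega⟩) = 0) → z = 0 := by
    intro z hz
    have h0 : (0 : ℕ) < k := by omega
    have hstep : ∀ i : ℕ, ∀ h : i < k, z ⟨i, h⟩ = z ⟨0, h0⟩ ^ p ^ i := by
      intro i
      induction i with
      | zero => intro h; simp
      | succ j ih =>
        intro h
        have hj : j < k := by omega
        have hzj := hz ⟨j, hj⟩
        rw [dif_pos (show (j : ℕ) + 1 < k from h)] at hzj
        have hzj' : z ⟨j + 1, h⟩ = z ⟨j, hj⟩ ^ p := by linear_combination -hzj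
        rw [hzj', ih hj, ← pow_mul, ← pow_succ]
    -- the last coordinate
    have hk1 : k - 1 < k := by omega
    have hlast := hz ⟨k - 1, hk1⟩
    rw [dif_neg (by simp; omega)] at hlast
    rw [hstep (k - 1) hk1, hstep 1 (by omega), ← pow_mul, ← pow_succ] at hlast
    have hkk : p ^ (k - 1 + 1) = p ^ k := by congr 1; omega
    rw [hkk] at hlast
    set a := z ⟨0, h0⟩ with ha
    -- show a = 0
    have haz : a = 0 := by
      by_contra hane
      apply hAB (a ^ (p - 1))
      have hdvd : (p - 1) ∣ p ^ k - 1 := by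
        simpa using Nat.sub_dvd_pow_sub_pow p 1 k
      have hp2 : 2 ≤ p := hp.two_le
      have hNe : (p - 1) * ((p ^ k - 1) / (p - 1)) = p ^ k - 1 :=
        Nat.mul_div_cancel' hdvd
      have hpk1 : 1 ≤ p ^ k := Nat.one_le_pow _ _ (by omega)
      have e1 : (a ^ (p - 1)) ^ ((p ^ k - 1) / (p - 1)) = a ^ (p ^ k - 1) := by
        rw [← pow_mul, hNe]
      have e2 : a ^ (p ^ k) = a ^ (p ^ k - 1) * a := by
        rw [← pow_succ]; congr 1; omega
      have e3 : a ^ p = a ^ (p - 1) * a := by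
        rw [← pow_succ]; congr 1; omega
      have : a * ((a ^ (p - 1)) ^ ((p ^ k - 1) / (p - 1)) + A * a ^ (p - 1) + B) = 0 := by
        rw [e1]; linear_combination hlast - A * e3 - e2
      rcases mul_eq_zero.mp this with h | h
      · exact absurd h hane
      · exact h
    funext i
    have := hstep i i.isLt
    rw [haz, zero_pow (pow_ne_zero _ hp.pos.ne')] at this
    simpa using this
  -- injective implies bijective
  rw [Fintype.bijective_iff_injective_and_card]
  refine ⟨?_, rfl⟩
  intro x y hxy
  have hz := key (x - y) ?_
  · funext i
    have := congrFun hz i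
    simpa [sub_eq_zero] using this
  · intro i
    have h := congrFun hxy i
    simp only at h
    by_cases hc : (i : ℕ) + 1 < k
    · rw [dif_pos hc] at h ⊢
      simp only [Pi.sub_apply]
      rw [sub_pow_char]
      rw [dif_pos hc] at h
      linear_combination h
    · rw [dif_neg hc] at h ⊢
      simp only [Pi.sub_apply]
      rw [sub_pow_char]
      rw [dif_neg hc] at h
      linear_combination h
end

section
/- Let p be a prime, F = F_{p^n}, and A, B in F such that x^((p^k-1)/(p-1)) + A·x + B has no root in F. If x_1 is a nonzero element of F with x_1^(p^(k-1)) + A·x_1^p + B·x_1 = 0, then a contradiction follows; i.e., the only solution of x^(p^(k-1)) + A·x^p + B·x = 0 in F is x = 0. -/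
theorem stmt_3 (p : ℕ) (hp : p.Prime) (n k : ℕ) (hn : 1 ≤ n) (hk : 2 ≤ k)
    (F : Type*) [Field F] [Fintype F] (hF : Fintype.card F = p ^ n)
    (A B : F) (hAB : ∀ y : F, y ^ ((p ^ k - 1) / (p - 1)) + A * y + B ≠ 0)
    (x : F) (hx : x ^ (p ^ k) + A * x ^ p + B * x = 0) : x = 0 := by
  by_contra hx0
  have hp2 := hp.two_le
  have hpk : 1 ≤ p ^ k := Nat.one_le_pow _ _ (by omega)
  have hd : (p - 1) ∣ (p ^ k - 1) := by
    simpa using Nat.sub_dvd_pow_sub_pow p 1 k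
  have he : (p - 1) * ((p ^ k - 1) / (p - 1)) = p ^ k - 1 := Nat.mul_div_cancel' hd
  have h1 : x * x ^ (p ^ k - 1) = x ^ (p ^ k) := by
    rw [← pow_succ']
    congr 1
    omega
  have h2 : x * x ^ (p - 1) = x ^ p := by
    rw [← pow_succ']
    congr 1
    omega
  have key : x * (x ^ (p ^ k - 1) + A * x ^ (p - 1) + B) = 0 := by
    rw [mul_add, mul_add, mul_comm A, ← mul_assoc, h1, h2, mul_comm _ A, mul_comm x B]
    exact hx
  have key2 : x ^ (p ^ k - 1) + A * x ^ (p - 1) + B = 0 :=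
    (mul_eq_zero.mp key).resolve_left hx0
  exact hAB (x ^ (p - 1)) (by rw [← pow_mul, he]; exact key2)
end

section
/- Let q be a prime power and r ≥ 1. In F = F_{q^(2r+1)}, if l, m, n are nonzero elements representing three distinct points of PG(2r, F_q) (i.e., pairwise not F_q-multiples of one another) such that l, m, n are F_q-linearly dependent, then l^{-1}, m^{-1}, n^{-1} are F_q-linearly independent; i.e., no three distinct collinear points of PG(2r, F_q) remain collinear after the inversion map x ↦ x^{-1} on labels. -/
open Polynomial

lemma extract_coeffs (K F : Type*) [Field K] [Field F] [Algebra K F]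
    (l m n : F) (hl : l ≠ 0) (hm : m ≠ 0) (hn : n ≠ 0)
    (hlm : ∀ c : K, m ≠ c • l) (hln : ∀ c : K, n ≠ c • l) (hmn : ∀ c : K, n ≠ c • m)
    (hdep : ¬ LinearIndependent K ![l, m, n]) :
    ∃ a b c : K, a ≠ 0 ∧ b ≠ 0 ∧ c ≠ 0 ∧
      algebraMap K F a * l + algebraMap K F b * m + algebraMap K F c * n = 0 := by
  rw [Fintype.not_linearIndependent_iff] at hdep
  obtain ⟨g, hg, i, hi⟩ := hdep
  simp [Fin.sum_univ_three] at hg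
  refine ⟨g 0, g 1, g 2, ?_, ?_, ?_, ?_⟩
  · intro h0
    rw [h0, zero_smul, zero_add] at hg
    rcases eq_or_ne (g 2) 0 with h2 | h2
    · rw [h2, zero_smul, add_zero] at hg
      have h1 : g 1 = 0 := by simpa [smul_eq_zero, hm] using hg
      fin_cases i <;> simp_all
    · refine hmn (-(g 1)/g 2) ?_
      have hg2 : (algebraMap K F) (g 2) ≠ 0 :=
        fun h => h2 ((algebraMap K F).injective (by simpa using h))
      simp only [Algebra.smul_def] at hg ⊢
      rw [map_div₀, map_neg, div_mul_eq_mul_div, eq_div_iff hg2]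
      linear_combination hg
  · intro h1
    rw [h1, zero_smul, add_zero] at hg
    rcases eq_or_ne (g 2) 0 with h2 | h2
    · rw [h2, zero_smul, add_zero] at hg
      have h0 : g 0 = 0 := by simpa [smul_eq_zero, hl] using hg
      fin_cases i <;> simp_all
    · refine hln (-(g 0)/g 2) ?_
      have hg2 : (algebraMap K F) (g 2) ≠ 0 :=
        fun h => h2 ((algebraMap K F).injective (by simpa using h))
      simp only [Algebra.smul_def] at hg ⊢
      rw [map_div₀, map_neg, div_mul_eq_mul_div, eq_div_iff hg2]
      linear_combination hg
  · intro h2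
    rw [h2, zero_smul, add_zero] at hg
    rcases eq_or_ne (g 1) 0 with h1 | h1
    · rw [h1, zero_smul, add_zero] at hg
      have h0 : g 0 = 0 := by simpa [smul_eq_zero, hl] using hg
      fin_cases i <;> simp_all
    · refine hlm (-(g 0)/g 1) ?_
      have hg1 : (algebraMap K F) (g 1) ≠ 0 :=
        fun h => h1 ((algebraMap K F).injective (by simpa using h))
      simp only [Algebra.smul_def] at hg ⊢
      rw [map_div₀, map_neg, div_mul_eq_mul_div, eq_div_iff hg1]
      linear_combination hg
  · rw [Algebra.smul_def, Algebra.smul_def, Algebra.smul_def] at hg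
    linear_combination hg

theorem stmt_6 (K F : Type*) [Field K] [Fintype K] [Field F] [Algebra K F]
    (r : ℕ) (hr : 1 ≤ r) (hdim : Module.finrank K F = 2 * r + 1)
    (l m n : F) (hl : l ≠ 0) (hm : m ≠ 0) (hn : n ≠ 0)
    (hlm : ∀ c : K, m ≠ c • l) (hln : ∀ c : K, n ≠ c • l) (hmn : ∀ c : K, n ≠ c • m)
    (hdep : ¬ LinearIndependent K ![l, m, n])
    (hdep' : ¬ LinearIndependent K ![l⁻¹, m⁻¹, n⁻¹]) : False := by
  have hinj : Function.Injective (algebraMap K F) := (algebraMap K F).injective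
  have hfd : FiniteDimensional K F :=
    Module.finite_of_finrank_pos (by omega)
  -- pairwise independence of inverses
  have hlm' : ∀ c : K, m⁻¹ ≠ c • l⁻¹ := by
    intro c h
    have hc : c ≠ 0 := by
      rintro rfl; simp at h; exact hm h
    refine hlm c⁻¹ ?_
    rw [Algebra.smul_def] at h ⊢
    have := congrArg (·⁻¹) h
    simpa [mul_inv, map_inv₀, mul_comm] using this
  have hln' : ∀ c : K, n⁻¹ ≠ c • l⁻¹ := by
    intro c h
    have hc : c ≠ 0 := by
      rintro rfl; simp at h; exact hn h
    refine hln c⁻¹ ?_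
    rw [Algebra.smul_def] at h ⊢
    have := congrArg (·⁻¹) h
    simpa [mul_inv, map_inv₀, mul_comm] using this
  have hmn' : ∀ c : K, n⁻¹ ≠ c • m⁻¹ := by
    intro c h
    have hc : c ≠ 0 := by
      rintro rfl; simp at h; exact hn h
    refine hmn c⁻¹ ?_
    rw [Algebra.smul_def] at h ⊢
    have := congrArg (·⁻¹) h
    simpa [mul_inv, map_inv₀, mul_comm] using this
  obtain ⟨a, b, c, ha, hb, hc, h1⟩ :=
    extract_coeffs K F l m n hl hm hn hlm hln hmn hdep
  obtain ⟨d, e, f, hd, he, hf, h2⟩ :=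
    extract_coeffs K F l⁻¹ m⁻¹ n⁻¹ (inv_ne_zero hl) (inv_ne_zero hm) (inv_ne_zero hn)
      hlm' hln' hmn' hdep'
  set A := algebraMap K F a with hA
  set B := algebraMap K F b with hB
  set C' := algebraMap K F c with hC
  set D := algebraMap K F d with hD
  set E := algebraMap K F e with hE
  set Fc := algebraMap K F f with hF
  have hA0 : A ≠ 0 := fun h => ha (hinj (by rw [map_zero]; exact h))
  have hB0 : B ≠ 0 := fun h => hb (hinj (by rw [map_zero]; exact h))
  have hC0 : C' ≠ 0 := fun h => hc (hinj (by rw [map_zero]; exact h))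
  have hD0 : D ≠ 0 := fun h => hd (hinj (by rw [map_zero]; exact h))
  have hE0 : E ≠ 0 := fun h => he (hinj (by rw [map_zero]; exact h))
  have hF0 : Fc ≠ 0 := fun h => hf (hinj (by rw [map_zero]; exact h))
  -- clear inverses in h2
  have h2' : D * (m * n) + E * (l * n) + Fc * (l * m) = 0 := by
    have := h2
    field_simp at this
    linear_combination this
  -- key quadratic relation
  have key : Fc * B * m ^ 2 - (A * D - E * B - Fc * C') * (m * n) + E * C' * n ^ 2 = 0 := by
    linear_combination (E * n + Fc * m) * h1 - A * h2'
  set y : F := m * n⁻¹ with hy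
  have hy1 : y * n = m := by
    rw [hy]
    field_simp
  have hq : Fc * B * y ^ 2 - (A * D - E * B - Fc * C') * y + E * C' = 0 := by
    have hn2 : n ^ 2 ≠ 0 := pow_ne_zero 2 hn
    apply mul_right_cancel₀ hn2
    linear_combination key + (Fc * B * (y * n + m) - (A * D - E * B - Fc * C') * n) * hy1
  set p : K[X] := C (f * b) * X ^ 2 + C (-(a * d - e * b - f * c)) * X + C (e * c) with hp
  have hfb : f * b ≠ 0 := mul_ne_zero hf hb
  have hdq : p.degree = 2 := degree_quadratic hfb
  have hp0 : p ≠ 0 := fun h => by simp [h] at hdq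
  have hroot : aeval y p = 0 := by
    rw [hp]
    simp only [map_add, map_mul, map_pow, aeval_X, aeval_C, map_neg, map_sub,
      ← hA, ← hB, ← hC, ← hD, ← hE, ← hF]
    linear_combination hq
  have hint : IsIntegral K y := IsIntegral.of_finite K y
  have hdeg2 : (minpoly K y).degree ≤ 2 := (minpoly.degree_le_of_ne_zero K y hp0 hroot).trans hdq.le
  have hnd2 : (minpoly K y).natDegree ≤ 2 := natDegree_le_iff_degree_le.mpr hdeg2
  have hdvd : (minpoly K y).natDegree ∣ 2 * r + 1 := hdim ▸ minpoly.degree_dvd hint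
  have hpos : 0 < (minpoly K y).natDegree := minpoly.natDegree_pos hint
  have hnd1 : (minpoly K y).natDegree = 1 := by
    interval_cases h : (minpoly K y).natDegree
    · rfl
    · omega
  have heq := (minpoly.monic hint).eq_X_add_C hnd1
  have hy0 : y + algebraMap K F ((minpoly K y).coeff 0) = 0 := by
    have := minpoly.aeval K y
    rw [heq] at this
    simpa using this
  set k : K := -((minpoly K y).coeff 0) with hk
  have hyk : y = algebraMap K F k := by
    rw [hk, map_neg]
    exact eq_neg_of_add_eq_zero_left hy0
  have hk0' : k ≠ 0 := by
    intro h
    rw [h, map_zero, hy] at hyk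
    exact (mul_ne_zero hm (inv_ne_zero hn)) hyk
  have hkF : algebraMap K F k ≠ 0 := fun h => hk0' (hinj (by rw [map_zero]; exact h))
  have hmkn : m = algebraMap K F k * n := by
    have h' := hyk
    rw [hy] at h'
    field_simp at h'
    linear_combination h'
  refine hmn k⁻¹ ?_
  rw [Algebra.smul_def, map_inv₀, hmkn]
  field_simp
end

section
/- Let q = p^e be a prime power, r an integer, and w ≥ 2 with gcd(w, q^r - 1) = 1, gcd(r, w!) = 1, and w not a power of p. Let F = F_{q^r}. If l, m, n are nonzero elements of F representing three distinct points of PG(r-1, F_q) that are F_q-linearly dependent, then l^w, m^w, n^w are not F_q-linearly dependent (as representatives of distinct points). -/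
/-!
If `l = b m + c n` and `l ^ w = e m ^ w + f n ^ w`, then `x = n / m` is a root of
`(c X + b) ^ w - (f X ^ w + e)`. This polynomial is nonzero: for `k = p ^ v` with `p ^ v ∥ w`,
Lucas' theorem gives `choose w k ≡ w / p ^ v ≢ 0 (mod p)`, and `0 < k < w` because `w` is not a
power of `p`. Hence the degree of `x` over `K` is at most `w` and divides `r`, so it is `1` as
`gcd(r, w!) = 1`; but `x ∈ K` makes `m` and `n` proportional. The same degree argument applied to
`X ^ w - a` rules out `n ^ w = a m ^ w`.
-/

open Polynomial

namespace Nat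

theorem choose_prime_pow_mul_modEq {p : ℕ} (hp : p.Prime) (v m : ℕ) :
    (p ^ v * m).choose (p ^ v) ≡ m [MOD p] := by
  have := Fact.mk hp
  induction v with
  | zero => simp [Nat.ModEq.refl]
  | succ v ih =>
    refine Choose.choose_modEq_choose_mod_mul_choose_div_nat.trans ?_
    rw [pow_succ', mul_assoc, Nat.mul_mod_right, Nat.mul_mod_right,
      Nat.mul_div_cancel_left _ hp.pos, Nat.mul_div_cancel_left _ hp.pos, choose_zero_right,
      one_mul]
    exact ih

theorem exists_not_dvd_choose_of_ne_prime_pow {p w : ℕ} (hp : p.Prime) (hw : w ≠ 0)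
    (hpow : ¬ ∃ i, w = p ^ i) : ∃ k, 0 < k ∧ k < w ∧ ¬ p ∣ w.choose k := by
  refine ⟨p ^ w.factorization p, pow_pos hp.pos _,
    (Nat.ordProj_le p hw).lt_of_ne fun h ↦ hpow ⟨_, h.symm⟩, ?_⟩
  have hmod := choose_prime_pow_mul_modEq hp (w.factorization p) (ordCompl[p] w)
  rw [Nat.ordProj_mul_ordCompl_eq_self] at hmod
  rw [hmod.dvd_iff dvd_rfl]
  exact Nat.not_dvd_ordCompl hp hw

end Nat

namespace Polynomial

theorem coeff_C_mul_X_add_C_pow {R : Type*} [CommSemiring R] (a b : R) (n k : ℕ) :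
    ((C a * X + C b) ^ n).coeff k = a ^ k * b ^ (n - k) * n.choose k := by
  have hterm (i : ℕ) : (C a * X) ^ i * C b ^ (n - i) * (n.choose i : R[X]) =
      C (a ^ i * b ^ (n - i) * n.choose i) * X ^ i := by
    simp only [mul_pow, C_mul, C_pow, C_eq_natCast]; ring
  simp only [add_pow, hterm, finsetSum_coeff, coeff_C_mul_X_pow, Finset.sum_ite_eq,
    Finset.mem_range]
  split_ifs with hk
  · rfl
  · simp [Nat.choose_eq_zero_of_lt (by omega : n < k)]

theorem C_mul_X_add_C_pow_sub_ne_zero {R : Type*} [CommRing R] [IsDomain R] {a b : R}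
    (ha : a ≠ 0) (hb : b ≠ 0) {n k : ℕ} (hk : 0 < k) (hkn : k < n) (hchoose : (n.choose k : R) ≠ 0)
    (c d : R) : (C a * X + C b) ^ n - (C c * X ^ n + C d) ≠ 0 := by
  intro h
  have hcoeff := congrArg (coeff · k) h
  simp only [coeff_sub, coeff_add, coeff_C_mul_X_add_C_pow, coeff_C_mul_X_pow, coeff_C,
    hkn.ne, hk.ne', if_false, add_zero, sub_zero, coeff_zero] at hcoeff
  exact mul_ne_zero (mul_ne_zero (pow_ne_zero _ ha) (pow_ne_zero _ hb)) hchoose hcoeff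

end Polynomial

theorem not_linearIndependent_iff_exists_smul_add_smul {K V : Type*} [DivisionRing K]
    [AddCommGroup V] [Module K V] {u v t : V} (hvt : LinearIndependent K ![v, t]) :
    ¬ LinearIndependent K ![u, v, t] ↔ ∃ b c : K, b • v + c • t = u := by
  rw [← Submodule.mem_span_pair, ← Matrix.range_cons_cons_empty v t ![]]
  exact (linearIndependent_finCons.trans (and_iff_right hvt)).not_left

section Extension

variable {K F : Type*} [Field K] [Field F] [Algebra K F] {w : ℕ}

theorem mem_range_algebraMap_of_aeval_eq_zero (hw : (Module.finrank K F).Coprime w.factorial)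
    {P : K[X]} (hP : P ≠ 0) (hdeg : P.natDegree ≤ w) {x : F} (hx : aeval x P = 0) :
    x ∈ (algebraMap K F).range := by
  have hint : IsIntegral K x := IsAlgebraic.isIntegral ⟨P, hP, hx⟩
  have hdvd_rank : (minpoly K x).natDegree ∣ Module.finrank K F := by
    by_cases hfin : FiniteDimensional K F
    · exact minpoly.degree_dvd hint
    · rw [Module.finrank_of_not_finite hfin]
      exact dvd_zero _
  have hdvd_fact : (minpoly K x).natDegree ∣ w.factorial :=
    Nat.dvd_factorial (minpoly.natDegree_pos hint)
      ((natDegree_le_of_dvd (minpoly.dvd K x hx) hP).trans hdeg)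
  exact minpoly.natDegree_eq_one_iff.mp
    (Nat.eq_one_of_dvd_one (hw ▸ Nat.dvd_gcd hdvd_rank hdvd_fact))

theorem div_mem_range_algebraMap_of_smul_pow_eq_pow
    (hw : (Module.finrank K F).Coprime w.factorial) (hw0 : w ≠ 0) {m n : F} (hm : m ≠ 0) {a : K}
    (h : a • m ^ w = n ^ w) : n / m ∈ (algebraMap K F).range := by
  refine mem_range_algebraMap_of_aeval_eq_zero hw (X_pow_sub_C_ne_zero (Nat.pos_of_ne_zero hw0) a)
    natDegree_X_pow_sub_C.le ?_
  rw [map_sub, map_pow, aeval_X, aeval_C, div_pow, ← h, Algebra.smul_def,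
    mul_div_cancel_right₀ _ (pow_ne_zero w hm), sub_self]

theorem div_mem_range_algebraMap_of_smul_add_smul_pow_eq {p : ℕ} [CharP K p] (hp : p.Prime)
    (hw : (Module.finrank K F).Coprime w.factorial) (hw0 : w ≠ 0) (hpow : ¬ ∃ i, w = p ^ i)
    {m n : F} (hm : m ≠ 0) {b c : K} (hb : b ≠ 0) (hc : c ≠ 0) {e f : K}
    (h : e • m ^ w + f • n ^ w = (b • m + c • n) ^ w) : n / m ∈ (algebraMap K F).range := by
  obtain ⟨k, hk, hkw, hchoose⟩ := Nat.exists_not_dvd_choose_of_ne_prime_pow hp hw0 hpow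
  refine mem_range_algebraMap_of_aeval_eq_zero hw
    (C_mul_X_add_C_pow_sub_ne_zero hc hb hk hkw (by rwa [Ne, CharP.cast_eq_zero_iff K p]) f e)
    (by compute_degree) ?_
  have hlin : algebraMap K F c * (n / m) + algebraMap K F b = (b • m + c • n) / m := by
    rw [Algebra.smul_def, Algebra.smul_def]
    field_simp
    ring
  have hpow : algebraMap K F f * (n / m) ^ w + algebraMap K F e = (b • m + c • n) ^ w / m ^ w := by
    rw [← h, Algebra.smul_def, Algebra.smul_def, div_pow]
    field_simp
    ring
  simp only [map_sub, map_add, map_mul, map_pow, aeval_X, aeval_C]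
  rw [hlin, hpow, div_pow, sub_self]

end Extension

theorem stmt_8_general (p e : ℕ) (hp : p.Prime)
    (K F : Type*) [Field K] [Fintype K] [Field F] [Algebra K F]
    (hq : Fintype.card K = p ^ e)
    (r w : ℕ) (hw : 2 ≤ w)
    (hw2 : Nat.Coprime r (Nat.factorial w))
    (hw3 : ¬ ∃ i : ℕ, w = p ^ i)
    (hdim : Module.finrank K F = r)
    (l m n : F) (hl : l ≠ 0)
    (hlm : ∀ c : K, m ≠ c • l) (hln : ∀ c : K, n ≠ c • l) (hmn : ∀ c : K, n ≠ c • m)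
    (hdep : ¬ LinearIndependent K ![l, m, n]) :
    LinearIndependent K ![l ^ w, m ^ w, n ^ w] := by
  have := Fact.mk hp
  have := charP_of_card_eq_prime_pow hq
  subst hdim
  have hm : m ≠ 0 := by simpa using hlm 0
  have hw0 : w ≠ 0 := by omega
  have hnm : n / m ∉ (algebraMap K F).range := fun ⟨s, hs⟩ ↦
    hmn s (by rw [Algebra.smul_def, hs, div_mul_cancel₀ _ hm])
  obtain ⟨b, c, rfl⟩ := (not_linearIndependent_iff_exists_smul_add_smul
    ((LinearIndependent.pair_iff' hm).mpr fun a ha ↦ hmn a ha.symm)).mp hdep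
  have hb : b ≠ 0 := by
    rintro rfl
    have hc : c ≠ 0 := by rintro rfl; simp at hl
    exact hln c⁻¹ (by rw [zero_smul, zero_add, inv_smul_smul₀ hc])
  have hc : c ≠ 0 := by
    rintro rfl
    exact hlm b⁻¹ (by rw [zero_smul, add_zero, inv_smul_smul₀ hb])
  have hmn_pow : LinearIndependent K ![m ^ w, n ^ w] :=
    (LinearIndependent.pair_iff' (pow_ne_zero w hm)).mpr fun a ha ↦
      hnm (div_mem_range_algebraMap_of_smul_pow_eq_pow hw2 hw0 hm ha)
  by_contra hind
  obtain ⟨e', f, hef⟩ := (not_linearIndependent_iff_exists_smul_add_smul hmn_pow).mp hind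
  exact hnm (div_mem_range_algebraMap_of_smul_add_smul_pow_eq hp hw2 hw0 hw3 hm hb hc hef)

theorem stmt_8 (p e : ℕ) (hp : p.Prime) (he : 1 ≤ e)
    (K F : Type*) [Field K] [Fintype K] [Field F] [Algebra K F]
    (hq : Fintype.card K = p ^ e)
    (r w : ℕ) (hw : 2 ≤ w)
    (hw1 : Nat.Coprime w ((p ^ e) ^ r - 1))
    (hw2 : Nat.Coprime r (Nat.factorial w))
    (hw3 : ¬ ∃ i : ℕ, w = p ^ i)
    (hdim : Module.finrank K F = r)
    (l m n : F) (hl : l ≠ 0) (hm : m ≠ 0) (hn : n ≠ 0)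
    (hlm : ∀ c : K, m ≠ c • l) (hln : ∀ c : K, n ≠ c • l) (hmn : ∀ c : K, n ≠ c • m)
    (hdep : ¬ LinearIndependent K ![l, m, n]) :
    LinearIndependent K ![l ^ w, m ^ w, n ^ w] :=
  stmt_8_general p e hp K F hq r w hw hw2 hw3 hdim l m n hl hlm hln hmn hdep
end

section
/- The number of affine spaces in any family of mutually orthogoval AG(d, F_q) (all on the same point set of size q^d) is at most (q^d - 2)/(q - 2), when q > 2. -/
/-- An affine line in an `F`-vector space: a coset of a one-dimensional subspace. -/
def IsAffLine (F : Type*) {V : Type*} [Field F] [AddCommGroup V] [Module F V]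
    (l : Set V) : Prop :=
  ∃ s u : V, u ≠ 0 ∧ l = {x | ∃ c : F, x = s + c • u}

theorem stmt_12 (K : Type*) [Field K] [Fintype K] (q : ℕ) (hq : Fintype.card K = q)
    (hq2 : 2 < q) (d : ℕ) (hd : 1 ≤ d) (N : ℕ)
    (σ : Fin N → ((Fin d → K) ≃ (Fin d → K)))
    (hortho : ∀ i j : Fin N, i ≠ j → ∀ l l' : Set (Fin d → K),
      IsAffLine K l → IsAffLine K l' → ((σ i '' l) ∩ (σ j '' l')).ncard ≤ 2) :
    N ≤ (q ^ d - 2) / (q - 2) := by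
  classical
  set a : Fin d → K := fun _ => 0 with ha
  set b : Fin d → K := fun _ => 1 with hb
  have hab : a ≠ b := by
    intro h
    exact zero_ne_one (congrFun h ⟨0, hd⟩)
  have hu : ∀ i : Fin N, (σ i).symm b - (σ i).symm a ≠ 0 := by
    intro i h
    apply hab
    have : (σ i).symm a = (σ i).symm b := (sub_eq_zero.mp h).symm
    exact (σ i).symm.injective this
  set f : Fin N → K → (Fin d → K) :=
    fun i c => (σ i).symm a + c • ((σ i).symm b - (σ i).symm a) with hf
  set L : Fin N → Set (Fin d → K) := fun i => {x | ∃ c : K, x = f i c} with hL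
  have hLline : ∀ i, IsAffLine K (L i) := fun i => ⟨_, _, hu i, rfl⟩
  have hfinj : ∀ i, Function.Injective (f i) := by
    intro i c c' h
    simp only [hf] at h
    have h2 : (c - c') • ((σ i).symm b - (σ i).symm a) = 0 := by
      have := add_left_cancel h
      rw [sub_smul, this]; simp
    rcases smul_eq_zero.mp h2 with h3 | h3
    · exact sub_eq_zero.mp h3
    · exact absurd h3 (hu i)
  set S : Fin N → Finset (Fin d → K) := fun i => Finset.image (f i) Finset.univ with hS
  have hScard : ∀ i, (S i).card = q := by
    intro i
    rw [hS]
    simp [Finset.card_image_of_injective _ (hfinj i), hq]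
  have hScoe : ∀ i, ((S i : Set (Fin d → K))) = L i := by
    intro i
    ext x
    simp [hS, hL, eq_comm]
  have haL : ∀ i, a ∈ σ i '' L i := by
    intro i
    exact ⟨(σ i).symm a, ⟨0, by simp [hf]⟩, by simp⟩
  have hbL : ∀ i, b ∈ σ i '' L i := by
    intro i
    exact ⟨(σ i).symm b, ⟨1, by simp [hf]⟩, by simp⟩
  set T : Fin N → Finset (Fin d → K) :=
    fun i => (Finset.image (σ i) (S i)) \ {a, b} with hT
  have hTsub : ∀ i, ((Finset.image (σ i) (S i) : Finset (Fin d → K)) : Set (Fin d → K))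
      = σ i '' L i := by
    intro i
    rw [Finset.coe_image, hScoe]
  have habmem : ∀ i, a ∈ Finset.image (σ i) (S i) ∧ b ∈ Finset.image (σ i) (S i) := by
    intro i
    constructor
    · have := haL i
      rw [← hTsub i] at this
      exact_mod_cast this
    · have := hbL i
      rw [← hTsub i] at this
      exact_mod_cast this
  have hTcard : ∀ i, (T i).card = q - 2 := by
    intro i
    rw [hT]
    have hsub : ({a, b} : Finset (Fin d → K)) ⊆ Finset.image (σ i) (S i) := by
      intro x hx
      simp only [Finset.mem_insert, Finset.mem_singleton] at hx
      rcases hx with rfl | rfl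
      · exact (habmem i).1
      · exact (habmem i).2
    rw [Finset.card_sdiff_of_subset hsub, Finset.card_image_of_injective _ (σ i).injective,
      hScard i, Finset.card_pair hab]
  have hdisj : ∀ i j : Fin N, i ≠ j → Disjoint (T i) (T j) := by
    intro i j hij
    rw [Finset.disjoint_left]
    intro x hxi hxj
    simp only [hT, Finset.mem_sdiff, Finset.mem_insert, Finset.mem_singleton] at hxi hxj
    obtain ⟨hxi1, hxne⟩ := hxi
    obtain ⟨hxj1, _⟩ := hxj
    push_neg at hxne
    obtain ⟨hxa, hxb⟩ := hxne
    have hxI : x ∈ (σ i '' L i) ∩ (σ j '' L j) := by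
      constructor
      · rw [← hTsub i]; exact_mod_cast hxi1
      · rw [← hTsub j]; exact_mod_cast hxj1
    have habI : a ∈ (σ i '' L i) ∩ (σ j '' L j) ∧ b ∈ (σ i '' L i) ∩ (σ j '' L j) :=
      ⟨⟨haL i, haL j⟩, ⟨hbL i, hbL j⟩⟩
    have h3 : ({a, b, x} : Set (Fin d → K)) ⊆ (σ i '' L i) ∩ (σ j '' L j) := by
      intro y hy
      rcases hy with rfl | rfl | rfl
      · exact habI.1
      · exact habI.2
      · exact hxI
    have hcard3 : ({a, b, x} : Set (Fin d → K)).ncard = 3 := by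
      rw [Set.ncard_insert_of_notMem (by simp [hab, Ne.symm hxa]),
        Set.ncard_insert_of_notMem (by simp [Ne.symm hxb]), Set.ncard_singleton]
    have hle : 3 ≤ ((σ i '' L i) ∩ (σ j '' L j)).ncard := by
      rw [← hcard3]
      exact Set.ncard_le_ncard h3 (Set.toFinite _)
    have := hortho i j hij (L i) (L j) (hLline i) (hLline j)
    omega
  have hunion : (Finset.univ.biUnion T).card = N * (q - 2) := by
    rw [Finset.card_biUnion (fun i _ j _ h => hdisj i j h)]
    simp [hTcard, Finset.sum_const]
  have hsubuniv : Finset.univ.biUnion T ⊆ Finset.univ \ ({a, b} : Finset (Fin d → K)) := by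
    intro x hx
    simp only [Finset.mem_biUnion] at hx
    obtain ⟨i, _, hxi⟩ := hx
    simp only [hT, Finset.mem_sdiff, Finset.mem_insert, Finset.mem_singleton] at hxi ⊢
    exact ⟨Finset.mem_univ x, hxi.2⟩
  have hcarduniv : (Finset.univ \ ({a, b} : Finset (Fin d → K))).card = q ^ d - 2 := by
    rw [Finset.card_sdiff_of_subset (Finset.subset_univ _), Finset.card_pair hab, Finset.card_univ]
    congr 1
    rw [Fintype.card_fun, hq, Fintype.card_fin]
  have hmain : N * (q - 2) ≤ q ^ d - 2 := by
    rw [← hunion, ← hcarduniv]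
    exact Finset.card_le_card hsubuniv
  rw [Nat.le_div_iff_mul_le (by omega)]
  exact hmain
end

section
/- The number of projective spaces in any family of mutually orthogoval PG(d, F_q) (all on the same point set of size (q^(d+1)-1)/(q-1)) is at most (q^(d+1) - 2q + 1)/(q - 1)^2. -/
/-!
Fix two points `A ≠ B`. In the `i`-th space the line through `A` and `B` has `q + 1` points,
so it contributes `q - 1` further points. Since no three points are collinear in two
different spaces, these `N` sets of `q - 1` points are pairwise disjoint and avoid `A` and `B`,
whence `N (q - 1) ≤ |PG(d, q)| - 2`. Multiplying by `q - 1` and using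
`|PG(d, q)| (q - 1) = q ^ (d + 1) - 1` gives the bound.
-/

/-- A line of the standard projective space `PG(d, K)`: the set of points lying in
(the projectivization of) a 2-dimensional linear subspace. -/
def IsProjLine (K V : Type*) [Field K] [AddCommGroup V] [Module K V]
    (l : Set (Projectivization K V)) : Prop :=
  ∃ W : Submodule K V, Module.finrank K W = 2 ∧ l = {P | P.submodule ≤ W}

theorem Set.card_mul_sub_two_le_of_pairwise_ncard_inter_le_two {α ι : Type*} [Finite α]
    [Fintype ι] {a b : α} (hab : a ≠ b) (L : ι → Set α) (ha : ∀ i, a ∈ L i)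
    (hb : ∀ i, b ∈ L i) {m : ℕ}
    (hm : ∀ i, m ≤ (L i).ncard) (hinter : Pairwise fun i j => (L i ∩ L j).ncard ≤ 2) :
    Fintype.card ι * (m - 2) ≤ Nat.card α - 2 := by
  set C : ι → Set α := fun i => L i \ {a, b}
  have hC : ∀ i, m - 2 ≤ (C i).ncard := fun i => by
    rw [Set.ncard_sdiff (Set.pair_subset (ha i) (hb i)), Set.ncard_pair hab]
    exact Nat.sub_le_sub_right (hm i) 2
  have hdisj : Pairwise fun i j => Disjoint (C i) (C j) := by
    intro i j hij
    refine Set.disjoint_left.mpr fun x ⟨hxi, hx⟩ ⟨hxj, _⟩ => ?_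
    have hxab : x ≠ a ∧ x ≠ b := by simpa [not_or] using hx
    have h3 : ({a, b, x} : Set α).ncard = 3 :=
      Set.ncard_eq_three.mpr ⟨a, b, x, hab, hxab.1.symm, hxab.2.symm, rfl⟩
    have hsub : ({a, b, x} : Set α) ⊆ L i ∩ L j :=
      Set.insert_subset ⟨ha i, ha j⟩ (Set.pair_subset ⟨hb i, hb j⟩ ⟨hxi, hxj⟩)
    have := Set.ncard_le_ncard hsub
    have := hinter hij
    omega
  calc Fintype.card ι * (m - 2) = ∑ _i : ι, (m - 2) := by simp
    _ ≤ ∑ i, (C i).ncard := Finset.sum_le_sum fun i _ => hC i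
    _ = (⋃ i, C i).ncard := by
      rw [Set.ncard_iUnion_of_finite (fun i => Set.toFinite _) hdisj, finsum_eq_sum_of_fintype]
    _ ≤ ({a, b}ᶜ : Set α).ncard :=
      Set.ncard_le_ncard (Set.iUnion_subset fun i => Set.sdiff_subset_compl _ _)
    _ = Nat.card α - 2 := by rw [Set.ncard_compl, Set.ncard_pair hab]

namespace Projectivization

variable {K V : Type*} [Field K] [AddCommGroup V] [Module K V]

theorem exists_isProjLine_mem_mem {a b : Projectivization K V} (hab : a ≠ b) :
    ∃ l, IsProjLine K V l ∧ a ∈ l ∧ b ∈ l := by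
  set W := Submodule.span K (Set.range ![a.rep, b.rep])
  have hrep_mem : ∀ P : Projectivization K V, P.rep ∈ W → P ∈ {P | P.submodule ≤ W} :=
    fun P h => by rwa [Set.mem_ofPred_eq, P.submodule_eq, Submodule.span_singleton_le_iff_mem]
  refine ⟨{P | P.submodule ≤ W}, ⟨W, ?_, rfl⟩, hrep_mem a ?_, hrep_mem b ?_⟩
  · rw [finrank_span_eq_card (linearIndependent_pair_iff_ne.mpr hab), Fintype.card_fin]
  · exact Submodule.subset_span ⟨0, rfl⟩
  · exact Submodule.subset_span ⟨1, rfl⟩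

theorem setOf_submodule_le_eq_range_map (W : Submodule K V) :
    {P : Projectivization K V | P.submodule ≤ W} =
      Set.range (map W.subtype W.injective_subtype) := by
  ext P
  induction P using ind with
  | h v hv =>
    simp only [Set.mem_ofPred_eq, submodule_mk, Submodule.span_singleton_le_iff_mem, Set.mem_range]
    constructor
    · intro hvW
      exact ⟨mk K ⟨v, hvW⟩ (by simpa using hv), rfl⟩
    · rintro ⟨P, hP⟩
      induction P using ind with
      | h w hw =>
        obtain ⟨c, hc⟩ := (mk_eq_mk_iff K _ _ _ hv).mp hP
        exact (W.smul_mem_iff' c).mp (hc ▸ w.2)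

theorem one_lt_card_of_two_le_finrank [Finite K] (h : 2 ≤ Module.finrank K V) :
    1 < Nat.card (Projectivization K V) := by
  rw [card_of_finrank K V rfl]
  calc 1 < ∑ i ∈ Finset.range 2, Nat.card K ^ i := by simp [Finset.sum_range_succ]
    _ ≤ ∑ i ∈ Finset.range (Module.finrank K V), Nat.card K ^ i :=
      Finset.sum_le_sum_of_subset (Finset.range_subset_range.mpr h)

theorem _root_.IsProjLine.ncard_eq [Finite K] {l : Set (Projectivization K V)}
    (hl : IsProjLine K V l) : l.ncard = Nat.card K + 1 := by
  obtain ⟨W, hW, rfl⟩ := hl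
  rw [setOf_submodule_le_eq_range_map, Set.ncard_range_of_injective (map_injective _ _),
    card_of_finrank_two K W hW]

end Projectivization

theorem stmt_13 (K : Type*) [Field K] [Fintype K] (q : ℕ) (hq : Fintype.card K = q)
    (d : ℕ) (hd : 1 ≤ d) (N : ℕ)
    (σ : Fin N → (Projectivization K (Fin (d + 1) → K) ≃ Projectivization K (Fin (d + 1) → K)))
    (hortho : ∀ i j : Fin N, i ≠ j →
      ∀ l l' : Set (Projectivization K (Fin (d + 1) → K)),
        IsProjLine K (Fin (d + 1) → K) l → IsProjLine K (Fin (d + 1) → K) l' →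
          ((σ i '' l) ∩ (σ j '' l')).ncard ≤ 2) :
    N ≤ (q ^ (d + 1) - 2 * q + 1) / ((q - 1) ^ 2) := by
  set V := Fin (d + 1) → K
  have hqK : Nat.card K = q := by rw [Nat.card_eq_fintype_card, hq]
  have hq2 : 1 < q := hq ▸ Fintype.one_lt_card
  have hpoints : 1 < Nat.card (Projectivization K V) :=
    Projectivization.one_lt_card_of_two_le_finrank (by rw [Module.finrank_fin_fun]; omega)
  obtain ⟨A, B, hAB⟩ := (Finite.one_lt_card_iff_nontrivial.mp hpoints).exists_pair_ne
  choose l hl hAl hBl using fun i =>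
    Projectivization.exists_isProjLine_mem_mem ((σ i).symm.injective.ne hAB)
  have hdisjoint := Set.card_mul_sub_two_le_of_pairwise_ncard_inter_le_two (m := q + 1) hAB
    (fun i => σ i '' l i) (fun i => ⟨_, hAl i, (σ i).apply_symm_apply A⟩)
    (fun i => ⟨_, hBl i, (σ i).apply_symm_apply B⟩)
    (fun i => by rw [Set.ncard_image_of_injective _ (σ i).injective, (hl i).ncard_eq, hqK])
    (fun i j hij => hortho i j hij _ _ (hl i) (hl j))
  have hcount := Projectivization.card K V
  rw [Nat.card_fun, Nat.card_fin, hqK] at hcount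
  rw [Fintype.card_fin, show q + 1 - 2 = q - 1 by omega] at hdisjoint
  rw [Nat.le_div_iff_mul_le (pow_pos (Nat.sub_pos_of_lt hq2) 2)]
  calc N * (q - 1) ^ 2 = N * (q - 1) * (q - 1) := by ring
    _ ≤ (Nat.card (Projectivization K V) - 2) * (q - 1) := Nat.mul_le_mul_right _ hdisjoint
    _ = q ^ (d + 1) - 1 - 2 * (q - 1) := by rw [Nat.sub_mul, ← hcount]
    _ ≤ q ^ (d + 1) - 2 * q + 1 := by omega
end
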